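/- For every δ > 0 there exists r_0 such that for every prime power q with r := q+1 ≥ r_0 the following holds: over the different choices of an edge S = {s_1,…,s_r} of the truncated projective plane T_r and edges F_1,…,F_r of T_r with S ∩ F_i = {s_i}, there are at least exp(r^{1/2−δ}) pairwise non-isomorphic hypergraphs of the form S(T_r,S,F_1,…,F_r). -/
import Mathlib


open Finset

noncomputable section
open scoped Classical

/-- A set of vertices `C` covers the hypergraph `H` if it meets every edge. -/
def IsCover {V : Type*} (C : Set V) (H : Set (Finset V)) : Prop :=
  ∀ e ∈ H, ∃ v ∈ C, v ∈ e

/-- The cover number `τ(H)`: the minimum cardinality of a cover of `H`. -/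
noncomputable def coverNumber {V : Type*} (H : Set (Finset V)) : ℕ :=
  sInf {n | ∃ C : Finset V, IsCover (↑C) H ∧ C.card = n}

/-- The matching number `ν(H)`: the maximum size of a set of pairwise disjoint edges. -/
noncomputable def matchingNumber {V : Type*} (H : Set (Finset V)) : ℕ :=
  sSup {n | ∃ M : Finset (Finset V), ↑M ⊆ H ∧
    (M : Set (Finset V)).Pairwise (fun e₁ e₂ => Disjoint e₁ e₂) ∧ M.card = n}

/-- A hypergraph is intersecting if any two edges share a vertex. -/
def Intersecting {V : Type*} (H : Set (Finset V)) : Prop :=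
  ∀ e₁ ∈ H, ∀ e₂ ∈ H, ∃ v, v ∈ e₁ ∧ v ∈ e₂

/-- A hypergraph is `r`-uniform if every edge has exactly `r` vertices. -/
def Uniform {V : Type*} (H : Set (Finset V)) (r : ℕ) : Prop :=
  ∀ e ∈ H, e.card = r

/-- `H` is `r`-partite with the given sides: the sides partition the vertex set and
every edge has at most one vertex in each side. -/
def Partite {V : Type*} {r : ℕ} (H : Set (Finset V)) (sides : Fin r → Set V) : Prop :=
  (∀ v : V, ∃! i, v ∈ sides i) ∧
  ∀ e ∈ H, ∀ i : Fin r, ∀ x ∈ e, ∀ y ∈ e, x ∈ sides i → y ∈ sides i → x = y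

/-- Two hypergraphs are isomorphic if a bijection of the vertex sets carries the
edge set of one onto the edge set of the other. -/
def Isomorphic {V W : Type*} (H₁ : Set (Finset V)) (H₂ : Set (Finset W)) : Prop :=
  ∃ φ : V ≃ W, ∀ e : Finset V, e ∈ H₁ ↔ e.image φ ∈ H₂

/-- The edge `Ê = E ∪ {v_i}`, where the new vertex `v_i` is encoded as `Sum.inr i`. -/
def hatE {V : Type*} {r : ℕ} (E : Finset V) (i : Fin r) : Finset (V ⊕ Fin r) :=
  insert (Sum.inr i) (E.image Sum.inl)

/-- The construction `H(T, S, F_1, …, F_r)`, with new vertices `v_i = Sum.inr i`. -/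
def constructionH {V : Type*} {r : ℕ} (T : Set (Finset V)) (S : Finset V)
    (s : Fin r → V) (F : Fin r → Finset V) : Set (Finset (V ⊕ Fin r)) :=
  {Eh | ∃ E ∈ T, E ≠ S ∧ ∃ i : Fin r, s i ∈ E ∧ Eh = hatE E i} ∪
  {Eh | ∃ i : Fin r, Eh = (F i).image Sum.inl} ∪
  {Eh | ∃ i : Fin r, Eh = hatE ((F i).erase (s i)) i}

/-- The hypergraph `S(T, S, F_1, …, F_r) = E2 ∪ E3`. -/
def constructionS {V : Type*} {r : ℕ}
    (s : Fin r → V) (F : Fin r → Finset V) : Set (Finset (V ⊕ Fin r)) :=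
  {Eh | ∃ i : Fin r, Eh = (F i).image Sum.inl} ∪
  {Eh | ∃ i : Fin r, Eh = hatE ((F i).erase (s i)) i}

/-- The sides of the construction: the old sides (lifted), plus the new side `{v_1, …, v_r}`. -/
def extSides {V : Type*} {r : ℕ} (sides : Fin r → Set V) : Fin (r + 1) → Set (V ⊕ Fin r) :=
  Fin.lastCases (Set.range Sum.inr) (fun i => Sum.inl '' sides i)

open Configuration

/-- The points of the line `ℓ` other than `w`, as a finset of the vertex type `{p // p ≠ w}`. -/
noncomputable def linePoints {P L : Type*} [Membership P L] [Fintype P] (w : P) (ℓ : L) :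
    Finset {p : P // p ≠ w} :=
  Finset.univ.filter (fun p : {p : P // p ≠ w} => (p : P) ∈ ℓ)

/-- The truncated projective plane at the point `w`: the edges are the point sets of
the lines not passing through `w`, on the vertex set of points other than `w`. -/
noncomputable def truncatedPP (P : Type*) (L : Type*) [Membership P L] [Fintype P] (w : P) :
    Set (Finset {p : P // p ≠ w}) :=
  {E | ∃ ℓ : L, w ∉ ℓ ∧ E = linePoints w ℓ}

/-- The sides of the truncated projective plane, given an enumeration `m` of
the lines through `w`. -/
def ppSide {P L : Type*} [Membership P L] {r : ℕ} (w : P) (m : Fin r → L) (i : Fin r) :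
    Set {p : P // p ≠ w} :=
  {p : {p : P // p ≠ w} | (p : P) ∈ m i}

/-- `m` enumerates the lines through `w`. -/
def EnumeratesLinesThrough {P L : Type*} [Membership P L] {r : ℕ} (w : P) (m : Fin r → L) : Prop :=
  Function.Injective m ∧ (∀ i, w ∈ m i) ∧ ∀ ℓ : L, w ∈ ℓ → ∃ i, m i = ℓ

set_option linter.unusedSectionVars false

def hdeg {W : Type*} (H : Set (Finset W)) (v : W) : ℕ :=
  Set.ncard {e | e ∈ H ∧ v ∈ e}

lemma Isomorphic.symm' {V W : Type*} {H₁ : Set (Finset V)} {H₂ : Set (Finset W)}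
    (h : Isomorphic H₁ H₂) : Isomorphic H₂ H₁ := by
  obtain ⟨φ, hφ⟩ := h
  refine ⟨φ.symm, fun e => ?_⟩
  rw [hφ (e.image φ.symm)]
  rw [Finset.image_image]
  simp

lemma iso_hdeg {V W : Type*} {H₁ : Set (Finset V)} {H₂ : Set (Finset W)}
    (h : Isomorphic H₁ H₂) (D : ℕ) (hv : ∃ v, hdeg H₁ v = D) : ∃ v', hdeg H₂ v' = D := by
  obtain ⟨φ, hφ⟩ := h
  obtain ⟨v, hv⟩ := hv
  refine ⟨φ v, ?_⟩
  have key : {e | e ∈ H₂ ∧ φ v ∈ e} = (Finset.image φ) '' {e | e ∈ H₁ ∧ v ∈ e} := by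
    ext e'
    constructor
    · rintro ⟨he', hve'⟩
      refine ⟨e'.image φ.symm, ⟨?_, ?_⟩, ?_⟩
      · rw [hφ (e'.image φ.symm), Finset.image_image]; simpa
      · simpa using Finset.mem_image_of_mem φ.symm hve'
      · rw [Finset.image_image]; simp
    · rintro ⟨e, ⟨he, hve⟩, rfl⟩
      exact ⟨(hφ e).1 he, Finset.mem_image_of_mem φ hve⟩
  rw [hdeg, key, Set.ncard_image_of_injective _ (Finset.image_injective φ.injective)]
  exact hv

section Deg

variable {V : Type*} {r : ℕ} (s : Fin r → V) (F : Fin r → Finset V)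

lemma constructionS_eq : constructionS s F =
    Set.range (fun i => (F i).image Sum.inl) ∪
    Set.range (fun i => hatE ((F i).erase (s i)) i) := by
  unfold constructionS
  ext e
  simp [Set.range, eq_comm]

lemma mem_hatE_inl {E : Finset V} {i : Fin r} (x : V) :
    Sum.inl x ∈ hatE E i ↔ x ∈ E := by
  simp [hatE]

lemma mem_hatE_inr {E : Finset V} {i j : Fin r} :
    (Sum.inr j : V ⊕ Fin r) ∈ hatE E i ↔ j = i := by
  simp [hatE]

lemma hatE_inj : Function.Injective (fun i => hatE ((F i).erase (s i)) i) := by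
  intro i j hij
  simp only at hij
  have : (Sum.inr i : V ⊕ Fin r) ∈ hatE ((F j).erase (s j)) j := by
    rw [← hij]; exact Finset.mem_insert_self _ _
  exact (mem_hatE_inr).1 this

lemma hdeg_split (hF : Function.Injective F) (v : V ⊕ Fin r) :
    hdeg (constructionS s F) v =
      Set.ncard {i : Fin r | v ∈ (F i).image (Sum.inl : V → V ⊕ Fin r)} +
      Set.ncard {i : Fin r | v ∈ hatE ((F i).erase (s i)) i} := by
  classical
  set f := fun i : Fin r => (F i).image (Sum.inl : V → V ⊕ Fin r) with hf_def
  set g := fun i : Fin r => hatE ((F i).erase (s i)) i with hg_def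
  have hf : Function.Injective f :=
    fun i j h => hF (Finset.image_injective Sum.inl_injective h)
  have hg : Function.Injective g := hatE_inj s F
  have hfg : ∀ i j, f i ≠ g j := by
    intro i j h
    have : (Sum.inr j : V ⊕ Fin r) ∈ f i := by rw [h]; exact Finset.mem_insert_self _ _
    simp [hf_def] at this
  have hsplit : {e | e ∈ constructionS s F ∧ v ∈ e} =
      (f '' {i | v ∈ f i}) ∪ (g '' {i | v ∈ g i}) := by
    rw [constructionS_eq]
    ext e
    constructor
    · rintro ⟨he, hve⟩
      rcases he with ⟨i, rfl⟩ | ⟨i, rfl⟩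
      · exact Or.inl ⟨i, hve, rfl⟩
      · exact Or.inr ⟨i, hve, rfl⟩
    · rintro (⟨i, hvi, rfl⟩ | ⟨i, hvi, rfl⟩)
      · exact ⟨Or.inl ⟨i, rfl⟩, hvi⟩
      · exact ⟨Or.inr ⟨i, rfl⟩, hvi⟩
  rw [hdeg, hsplit, Set.ncard_union_eq ?_ ((Set.toFinite _).image _) ((Set.toFinite _).image _)]
  · rw [Set.ncard_image_of_injective _ hf, Set.ncard_image_of_injective _ hg]
  · rw [Set.disjoint_left]
    rintro e ⟨i, _, rfl⟩ ⟨j, _, hji⟩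
    exact hfg i j hji.symm

lemma hdeg_inl_formula (hF : Function.Injective F) (x : V) :
    hdeg (constructionS s F) (Sum.inl x) =
      Set.ncard {i : Fin r | x ∈ F i} + Set.ncard {i : Fin r | x ≠ s i ∧ x ∈ F i} := by
  rw [hdeg_split s F hF]
  congr 2
  · ext i; simp
  · ext i; simp [hatE]

lemma hdeg_inr_formula (hF : Function.Injective F) (i0 : Fin r) :
    hdeg (constructionS s F) (Sum.inr i0) = 1 := by
  rw [hdeg_split s F hF]
  have h1 : {i : Fin r | (Sum.inr i0 : V ⊕ Fin r) ∈ (F i).image Sum.inl} = ∅ := by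
    ext i; simp
  have h2 : {i : Fin r | (Sum.inr i0 : V ⊕ Fin r) ∈ hatE ((F i).erase (s i)) i} = {i0} := by
    ext i
    simp only [Set.mem_setOf_eq, mem_hatE_inr, Set.mem_singleton_iff]
    exact ⟨fun h => h.symm, fun h => h.symm⟩
  rw [h1, h2]
  simp

end Deg


universe u

section Plane

variable {P L : Type u} [Membership P L] [Fintype P] [Fintype L]
  [Configuration.ProjectivePlane P L]

lemma line_eq_of {p q : P} {l l' : L} (hpq : p ≠ q)
    (h1 : p ∈ l) (h2 : q ∈ l) (h3 : p ∈ l') (h4 : q ∈ l') : l = l' :=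
  (Configuration.Nondegenerate.eq_or_eq h1 h2 h3 h4).resolve_left hpq

lemma point_eq_of {p q : P} {l l' : L} (hll : l ≠ l')
    (h1 : p ∈ l) (h2 : p ∈ l') (h3 : q ∈ l) (h4 : q ∈ l') : p = q :=
  (Configuration.Nondegenerate.eq_or_eq (l₁ := l) (l₂ := l') h1 h3 h2 h4).resolve_right hll

lemma mem_linePoints {w : P} {ℓ : L} (x : {p : P // p ≠ w}) :
    x ∈ linePoints w ℓ ↔ (x : P) ∈ ℓ := by simp [linePoints]

end Plane

structure Setup (P : Type u) (L : Type u) [Membership P L] [Fintype P] [Fintype L]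
    [Configuration.ProjectivePlane P L] (w : P) (r t : ℕ) (m : Fin r → L) where
  hm_inj : Function.Injective m
  hm_w : ∀ i, w ∈ m i
  Sl : L
  hSw : w ∉ Sl
  sp : Fin r → {p : P // p ≠ w}
  hs_S : ∀ i, (sp i : P) ∈ Sl
  hs_m : ∀ i, (sp i : P) ∈ m i
  hs_surj : ∀ p' : P, p' ∈ Sl → ∃ i, (sp i : P) = p'
  ls : L
  hlsw : w ∉ ls
  hlsS : ls ≠ Sl
  idia : Fin r
  hidia : (sp idia : P) ∈ ls
  pt : Fin (t+1) → {p : P // p ≠ w}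
  hp_inj : Function.Injective pt
  hp_ls : ∀ j, (pt j : P) ∈ ls
  hp_nS : ∀ j, (pt j : P) ∉ Sl
  istar : Fin (t+1) → Fin r
  histar : ∀ j i, ((pt j : P) ∈ m i ↔ i = istar j)
  ldia : L
  hldia_s : (sp idia : P) ∈ ldia
  hldia_S : ldia ≠ Sl
  hldia_ls : ldia ≠ ls
  hldia_w : w ∉ ldia
  lsing : L
  hlsing_s : (sp (istar (Fin.last t)) : P) ∈ lsing
  hlsing_S : lsing ≠ Sl
  hlsing_w : w ∉ lsing
  hlsing_p : ∀ j, (pt j : P) ∉ lsing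
  J : Fin t → Finset (Fin r)
  hJcard : ∀ a, (J a).card = 2*t + a.val + 1
  hJdisj : ∀ a a' i, i ∈ J a → i ∈ J a' → a = a'
  hJdia : ∀ a i, i ∈ J a → i ≠ idia
  hJstar : ∀ a i j, i ∈ J a → i ≠ istar j

namespace Setup

variable {P L : Type u} [Membership P L] [Fintype P] [Fintype L]
  [Configuration.ProjectivePlane P L] {w : P} {r t : ℕ} {m : Fin r → L}
  (st : Setup P L w r t m)

lemma sp_inj : Function.Injective st.sp := by
  intro i j h
  have h1 : (st.sp i : P) ∈ m i := st.hs_m i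
  have h2 : (st.sp i : P) ∈ m j := h ▸ st.hs_m j
  have := line_eq_of (st.sp i).2 h1 (st.hm_w i) h2 (st.hm_w j)
  exact st.hm_inj this

lemma sp_mem_ls_iff {i : Fin r} : (st.sp i : P) ∈ st.ls ↔ i = st.idia := by
  constructor
  · intro h
    have : (st.sp i : P) = (st.sp st.idia : P) :=
      point_eq_of st.hlsS h (st.hs_S i) st.hidia (st.hs_S st.idia)
    exact st.sp_inj (Subtype.ext this)
  · rintro rfl; exact st.hidia

lemma hp_ne_s (j : Fin (t+1)) (i : Fin r) : (st.pt j : P) ≠ (st.sp i : P) := by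
  intro h
  exact st.hp_nS j (h ▸ st.hs_S i)

lemma hp_ldia (j : Fin (t+1)) : (st.pt j : P) ∉ st.ldia := by
  intro h
  exact st.hp_ne_s j st.idia
    (point_eq_of st.hldia_ls.symm (st.hp_ls j) h st.hidia st.hldia_s)

/-- the line through `pt j` and `sp i` -/
noncomputable def gLine (j : Fin (t+1)) (i : Fin r) : L :=
  Configuration.HasLines.mkLine (st.hp_ne_s j i)

lemma pt_mem_gLine (j : Fin (t+1)) (i : Fin r) : (st.pt j : P) ∈ st.gLine j i :=
  (Configuration.HasLines.mkLine_ax (st.hp_ne_s j i)).1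

lemma sp_mem_gLine (j : Fin (t+1)) (i : Fin r) : (st.sp i : P) ∈ st.gLine j i :=
  (Configuration.HasLines.mkLine_ax (st.hp_ne_s j i)).2

lemma gLine_ne_S (j : Fin (t+1)) (i : Fin r) : st.gLine j i ≠ st.Sl := by
  intro h
  exact st.hp_nS j (h ▸ st.pt_mem_gLine j i)

lemma gLine_w {j : Fin (t+1)} {i : Fin r} (h : i ≠ st.istar j) : w ∉ st.gLine j i := by
  intro hw
  have : st.gLine j i = m i :=
    line_eq_of (st.sp i).2 (st.sp_mem_gLine j i) hw (st.hs_m i) (st.hm_w i)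
  exact h ((st.histar j i).1 (this ▸ st.pt_mem_gLine j i))

lemma gLine_p {j j' : Fin (t+1)} {i : Fin r} (hjj : j ≠ j') (hi : i ≠ st.idia) :
    (st.pt j : P) ∉ st.gLine j' i := by
  intro h
  have hne : (st.pt j : P) ≠ (st.pt j' : P) := fun e => hjj (st.hp_inj (Subtype.ext e))
  have : st.gLine j' i = st.ls :=
    line_eq_of hne h (st.pt_mem_gLine j' i) (st.hp_ls j) (st.hp_ls j')
  exact hi (st.sp_mem_ls_iff.1 (this ▸ st.sp_mem_gLine j' i))

/-- the line used for `F i` given the active set `A` -/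
noncomputable def lineF (A : Finset (Fin t)) (i : Fin r) : L :=
  if i = st.idia then st.ldia
  else if i = st.istar (Fin.last t) then st.lsing
  else if h : ∃ a, a ∈ A ∧ i ∈ st.J a then st.gLine (Fin.castSucc h.choose) i
  else st.gLine (Fin.last t) i

lemma lineF_cases (A : Finset (Fin t)) (i : Fin r) :
    (i = st.idia ∧ st.lineF A i = st.ldia) ∨
    (i ≠ st.idia ∧ i = st.istar (Fin.last t) ∧ st.lineF A i = st.lsing) ∨
    (∃ a, a ∈ A ∧ i ∈ st.J a ∧ i ≠ st.idia ∧ i ≠ st.istar (Fin.last t) ∧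
      st.lineF A i = st.gLine (Fin.castSucc a) i) ∨
    ((∀ a ∈ A, i ∉ st.J a) ∧ i ≠ st.idia ∧ i ≠ st.istar (Fin.last t) ∧
      st.lineF A i = st.gLine (Fin.last t) i) := by
  unfold lineF
  split_ifs with h1 h2 h3
  · exact Or.inl ⟨h1, rfl⟩
  · exact Or.inr (Or.inl ⟨h1, h2, rfl⟩)
  · exact Or.inr (Or.inr (Or.inl ⟨h3.choose, h3.choose_spec.1, h3.choose_spec.2, h1, h2, rfl⟩))
  · push_neg at h3
    exact Or.inr (Or.inr (Or.inr ⟨h3, h1, h2, rfl⟩))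

lemma sp_mem_lineF (A : Finset (Fin t)) (i : Fin r) : (st.sp i : P) ∈ st.lineF A i := by
  rcases st.lineF_cases A i with ⟨h, he⟩ | ⟨_, h, he⟩ | ⟨a, _, _, _, _, he⟩ | ⟨_, _, _, he⟩
  · rw [he, h]; exact st.hldia_s
  · rw [he, h]; exact st.hlsing_s
  · rw [he]; exact st.sp_mem_gLine _ i
  · rw [he]; exact st.sp_mem_gLine _ i

lemma lineF_ne_S (A : Finset (Fin t)) (i : Fin r) : st.lineF A i ≠ st.Sl := by
  rcases st.lineF_cases A i with ⟨_, he⟩ | ⟨_, _, he⟩ | ⟨a, _, _, _, _, he⟩ | ⟨_, _, _, he⟩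
  · rw [he]; exact st.hldia_S
  · rw [he]; exact st.hlsing_S
  · rw [he]; exact st.gLine_ne_S _ i
  · rw [he]; exact st.gLine_ne_S _ i

lemma lineF_w (A : Finset (Fin t)) (i : Fin r) : w ∉ st.lineF A i := by
  rcases st.lineF_cases A i with ⟨_, he⟩ | ⟨_, _, he⟩ | ⟨a, _, hJ, _, _, he⟩ | ⟨_, _, h2, he⟩
  · rw [he]; exact st.hldia_w
  · rw [he]; exact st.hlsing_w
  · rw [he]; exact st.gLine_w (st.hJstar a i _ hJ)
  · rw [he]; exact st.gLine_w h2

lemma pt_castSucc_mem_lineF (A : Finset (Fin t)) (a : Fin t) (i : Fin r) :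
    (st.pt (Fin.castSucc a) : P) ∈ st.lineF A i ↔ a ∈ A ∧ i ∈ st.J a := by
  constructor
  · intro h
    rcases st.lineF_cases A i with ⟨_, he⟩ | ⟨_, _, he⟩ | ⟨a', hA, hJ, hid, _, he⟩ |
      ⟨_, hid, _, he⟩
    · rw [he] at h; exact absurd h (st.hp_ldia _)
    · rw [he] at h; exact absurd h (st.hlsing_p _)
    · rw [he] at h
      rcases eq_or_ne a a' with rfl | hne
      · exact ⟨hA, hJ⟩
      · exact absurd h (st.gLine_p (fun e => hne (Fin.castSucc_injective t e)) hid)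
    · rw [he] at h
      exact absurd h (st.gLine_p (Fin.castSucc_lt_last a).ne hid)
  · rintro ⟨hA, hJ⟩
    rcases st.lineF_cases A i with ⟨hid, _⟩ | ⟨_, hisl, _⟩ | ⟨a', hA', hJ', _, _, he⟩ |
      ⟨hnone, _, _, _⟩
    · exact absurd hid (st.hJdia a i hJ)
    · exact absurd hisl (st.hJstar a i _ hJ)
    · have : a' = a := st.hJdisj a' a i hJ' hJ
      rw [he, this]; exact st.pt_mem_gLine _ i
    · exact absurd hJ (hnone a hA)

lemma pt_last_mem_lineF (A : Finset (Fin t)) (i : Fin r) :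
    (st.pt (Fin.last t) : P) ∈ st.lineF A i ↔
      (i ≠ st.idia ∧ i ≠ st.istar (Fin.last t) ∧ ∀ a ∈ A, i ∉ st.J a) := by
  constructor
  · intro h
    rcases st.lineF_cases A i with ⟨_, he⟩ | ⟨_, _, he⟩ | ⟨a', _, _, hid, _, he⟩ |
      ⟨hnone, hid, hisl, he⟩
    · rw [he] at h; exact absurd h (st.hp_ldia _)
    · rw [he] at h; exact absurd h (st.hlsing_p _)
    · rw [he] at h
      exact absurd h (st.gLine_p (Fin.castSucc_lt_last a').ne' hid)
    · exact ⟨hid, hisl, hnone⟩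
  · rintro ⟨hid, hisl, hnone⟩
    rcases st.lineF_cases A i with ⟨h, _⟩ | ⟨_, h, _⟩ | ⟨a', hA', hJ', _, _, he⟩ |
      ⟨_, _, _, he⟩
    · exact absurd h hid
    · exact absurd h hisl
    · exact absurd hJ' (hnone a' hA')
    · rw [he]; exact st.pt_mem_gLine _ i

lemma accidental_bound (A : Finset (Fin t)) (x : {p : P // p ≠ w})
    (hx : ∀ j, x ≠ st.pt j) :
    (univ.filter fun i => (x : P) ∈ st.lineF A i).card ≤ t + 3 := by
  classical
  set γ : Fin r → Fin (t+1) ⊕ Fin 2 := fun i =>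
    if i = st.idia then Sum.inr 0
    else if i = st.istar (Fin.last t) then Sum.inr 1
    else if h : ∃ a, a ∈ A ∧ i ∈ st.J a then Sum.inl (Fin.castSucc h.choose)
    else Sum.inl (Fin.last t) with hγ
  have gamma_spec : ∀ i j, γ i = Sum.inl j → st.lineF A i = st.gLine j i := by
    intro i j h
    rw [hγ] at h
    simp only at h
    unfold lineF
    split_ifs at h ⊢ with h1 h2 h3
    · exact congrArg (fun jj => st.gLine jj i) (Sum.inl_injective h)
    · exact congrArg (fun jj => st.gLine jj i) (Sum.inl_injective h)
  have gamma_inr : ∀ i (c : Fin 2), γ i = Sum.inr c →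
      (c = 0 ∧ i = st.idia) ∨ (c = 1 ∧ i = st.istar (Fin.last t)) := by
    intro i c h
    rw [hγ] at h
    simp only at h
    split_ifs at h with h1 h2 h3
    · exact Or.inl ⟨(Sum.inr_injective h).symm, h1⟩
    · exact Or.inr ⟨(Sum.inr_injective h).symm, h2⟩
  have hinj : Set.InjOn γ (univ.filter fun i => (x : P) ∈ st.lineF A i) := by
    intro i hi i' hi' hγe
    simp only [coe_filter, Set.mem_setOf_eq, mem_univ, true_and] at hi hi'
    match he : γ i with
    | Sum.inr c =>
      rw [he] at hγe
      rcases gamma_inr i c he with ⟨hc, hic⟩ | ⟨hc, hic⟩ <;>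
        rcases gamma_inr i' c hγe.symm with ⟨hc', hic'⟩ | ⟨hc', hic'⟩
      · rw [hic, hic']
      · rw [hc] at hc'; exact absurd hc'.symm (by decide)
      · rw [hc] at hc'; exact absurd hc'.symm (by decide)
      · rw [hic, hic']
    | Sum.inl j =>
      rw [he] at hγe
      have e1 := gamma_spec i j he
      have e2 := gamma_spec i' j hγe.symm
      by_contra hne
      have hspne : (st.sp i : P) ≠ (st.sp i' : P) :=
        fun e => hne (st.sp_inj (Subtype.ext e))
      rcases eq_or_ne (st.gLine j i) (st.gLine j i') with heq | hneq
      · have : st.gLine j i = st.Sl :=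
          line_eq_of hspne (st.sp_mem_gLine j i) (heq ▸ st.sp_mem_gLine j i')
            (st.hs_S i) (st.hs_S i')
        exact st.gLine_ne_S j i this
      · have : (x : P) = (st.pt j : P) := by
          refine point_eq_of hneq ?_ ?_ (st.pt_mem_gLine j i) (st.pt_mem_gLine j i')
          · rw [← e1]; exact hi
          · rw [← e2]; exact hi'
        exact hx j (Subtype.ext this)
  calc (univ.filter fun i => (x : P) ∈ st.lineF A i).card
      ≤ (univ : Finset (Fin (t+1) ⊕ Fin 2)).card :=
        Finset.card_le_card_of_injOn γ (fun _ _ => mem_univ _) hinj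
    _ = t + 3 := by simp

end Setup

namespace Setup

variable {P L : Type u} [Membership P L] [Fintype P] [Fintype L]
  [Configuration.ProjectivePlane P L] {w : P} {r t : ℕ} {m : Fin r → L}
  (st : Setup P L w r t m)

noncomputable def Ffin (A : Finset (Fin t)) (i : Fin r) : Finset {p : P // p ≠ w} :=
  linePoints w (st.lineF A i)

lemma mem_Ffin {A : Finset (Fin t)} {i : Fin r} (x : {p : P // p ≠ w}) :
    x ∈ st.Ffin A i ↔ (x : P) ∈ st.lineF A i := mem_linePoints x

lemma Ffin_mem_truncated (A : Finset (Fin t)) (i : Fin r) :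
    st.Ffin A i ∈ truncatedPP P L w := ⟨st.lineF A i, st.lineF_w A i, rfl⟩

lemma sp_mem_Ffin (A : Finset (Fin t)) (i : Fin r) : st.sp i ∈ st.Ffin A i :=
  (st.mem_Ffin _).2 (st.sp_mem_lineF A i)

lemma eq_sp_of_S_mem {A : Finset (Fin t)} {i : Fin r} {x : {p : P // p ≠ w}}
    (hxS : (x : P) ∈ st.Sl) (hx : x ∈ st.Ffin A i) : x = st.sp i := by
  refine Subtype.ext (point_eq_of (st.lineF_ne_S A i) ((st.mem_Ffin x).1 hx) hxS
    (st.sp_mem_lineF A i) (st.hs_S i))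

lemma Ffin_inj (A : Finset (Fin t)) : Function.Injective (st.Ffin A) := by
  intro i i' h
  have h1 : st.sp i ∈ st.Ffin A i' := h ▸ st.sp_mem_Ffin A i
  have := st.eq_sp_of_S_mem (st.hs_S i) h1
  exact st.sp_inj this

lemma mem_image_sp (x : {p : P // p ≠ w}) :
    x ∈ Finset.univ.image st.sp ↔ (x : P) ∈ st.Sl := by
  simp only [Finset.mem_image, Finset.mem_univ, true_and]
  constructor
  · rintro ⟨i, rfl⟩; exact st.hs_S i
  · intro h
    obtain ⟨i, hi⟩ := st.hs_surj x h
    exact ⟨i, Subtype.ext hi⟩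

lemma image_sp_mem_truncated : Finset.univ.image st.sp ∈ truncatedPP P L w := by
  refine ⟨st.Sl, st.hSw, ?_⟩
  ext x
  rw [st.mem_image_sp, mem_linePoints]

lemma image_inter (A : Finset (Fin t)) (i : Fin r) :
    Finset.univ.image st.sp ∩ st.Ffin A i = {st.sp i} := by
  ext x
  simp only [Finset.mem_inter, Finset.mem_singleton]
  constructor
  · rintro ⟨h1, h2⟩
    exact st.eq_sp_of_S_mem ((st.mem_image_sp x).1 h1) h2
  · rintro rfl
    exact ⟨(st.mem_image_sp _).2 (st.hs_S i), st.sp_mem_Ffin A i⟩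

/-- the hypergraph of the construction for the active set `A` -/
noncomputable def HA (A : Finset (Fin t)) : Set (Finset ({p : P // p ≠ w} ⊕ Fin r)) :=
  constructionS st.sp (st.Ffin A)

lemma hdeg_inr (A : Finset (Fin t)) (i0 : Fin r) : hdeg (st.HA A) (Sum.inr i0) = 1 :=
  hdeg_inr_formula st.sp (st.Ffin A) (st.Ffin_inj A) i0

lemma hdeg_inl_s (A : Finset (Fin t)) (j : Fin r) :
    hdeg (st.HA A) (Sum.inl (st.sp j)) = 1 := by
  rw [HA, hdeg_inl_formula st.sp (st.Ffin A) (st.Ffin_inj A)]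
  have h1 : {i : Fin r | st.sp j ∈ st.Ffin A i} = {j} := by
    ext i
    simp only [Set.mem_setOf_eq, Set.mem_singleton_iff]
    constructor
    · intro hy
      exact (st.sp_inj (st.eq_sp_of_S_mem (st.hs_S j) hy)).symm
    · rintro rfl
      exact st.sp_mem_Ffin A _
  have h2 : {i : Fin r | st.sp j ≠ st.sp i ∧ st.sp j ∈ st.Ffin A i} = ∅ := by
    ext i
    simp only [Set.mem_setOf_eq, Set.mem_empty_iff_false, iff_false, not_and]
    intro hne hy
    exact hne (st.eq_sp_of_S_mem (st.hs_S j) hy)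
  rw [h1, h2]
  simp

lemma hdeg_inl_not_s (A : Finset (Fin t)) (x : {p : P // p ≠ w}) (hx : (x : P) ∉ st.Sl) :
    hdeg (st.HA A) (Sum.inl x) = 2 * Set.ncard {i : Fin r | (x : P) ∈ st.lineF A i} := by
  rw [HA, hdeg_inl_formula st.sp (st.Ffin A) (st.Ffin_inj A)]
  have hxs : ∀ i, x ≠ st.sp i := by
    intro i h
    exact hx (h ▸ st.hs_S i)
  have h1 : {i : Fin r | x ∈ st.Ffin A i} = {i : Fin r | (x : P) ∈ st.lineF A i} := by
    ext i; rw [Set.mem_setOf_eq, st.mem_Ffin x]; rfl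
  have h2 : {i : Fin r | x ≠ st.sp i ∧ x ∈ st.Ffin A i} =
      {i : Fin r | (x : P) ∈ st.lineF A i} := by
    ext i
    simp only [Set.mem_setOf_eq]
    rw [st.mem_Ffin x]
    exact ⟨fun h => h.2, fun h => ⟨hxs i, h⟩⟩
  rw [h1, h2]
  ring

lemma hdeg_pt_act (A : Finset (Fin t)) (a : Fin t) (ha : a ∈ A) :
    hdeg (st.HA A) (Sum.inl (st.pt (Fin.castSucc a))) = 2 * (2*t + a.val + 1) := by
  rw [st.hdeg_inl_not_s A _ (st.hp_nS _)]
  have h1 : {i : Fin r | (st.pt (Fin.castSucc a) : P) ∈ st.lineF A i} = ↑(st.J a) := by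
    ext i
    rw [Set.mem_setOf_eq, st.pt_castSucc_mem_lineF A a i, Finset.mem_coe]
    exact ⟨fun h => h.2, fun h => ⟨ha, h⟩⟩
  rw [h1, Set.ncard_coe_finset, st.hJcard a]

lemma hdeg_pt_inact (A : Finset (Fin t)) (a : Fin t) (ha : a ∉ A) :
    hdeg (st.HA A) (Sum.inl (st.pt (Fin.castSucc a))) = 0 := by
  rw [st.hdeg_inl_not_s A _ (st.hp_nS _)]
  have h1 : {i : Fin r | (st.pt (Fin.castSucc a) : P) ∈ st.lineF A i} = ∅ := by
    ext i
    rw [Set.mem_setOf_eq, st.pt_castSucc_mem_lineF A a i]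
    simp only [Set.mem_empty_iff_false, iff_false, not_and]
    intro h; exact absurd h ha
  simp [h1]

lemma hdeg_pt_last (A : Finset (Fin t)) :
    hdeg (st.HA A) (Sum.inl (st.pt (Fin.last t))) = 2 *
      (univ \ (insert st.idia (insert (st.istar (Fin.last t)) (A.biUnion st.J)))).card := by
  rw [st.hdeg_inl_not_s A _ (st.hp_nS _)]
  have h1 : {i : Fin r | (st.pt (Fin.last t) : P) ∈ st.lineF A i} =
      ↑(univ \ (insert st.idia (insert (st.istar (Fin.last t)) (A.biUnion st.J)))) := by
    ext i
    rw [Set.mem_setOf_eq, st.pt_last_mem_lineF A i, Finset.mem_coe, Finset.mem_sdiff]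
    simp only [Finset.mem_univ, true_and, Finset.mem_insert, Finset.mem_biUnion, not_or,
      not_exists, not_and]
  rw [h1, Set.ncard_coe_finset]

lemma cardB0_ge (A : Finset (Fin t)) :
    r ≤ (univ \ (insert st.idia (insert (st.istar (Fin.last t)) (A.biUnion st.J)))).card
      + (3*t*t + 2) := by
  have h1 : (insert st.idia (insert (st.istar (Fin.last t)) (A.biUnion st.J))).card
      ≤ 3*t*t + 2 := by
    refine le_trans (Finset.card_insert_le _ _) ?_
    have h2 : (insert (st.istar (Fin.last t)) (A.biUnion st.J)).card ≤ 3*t*t + 1 := by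
      refine le_trans (Finset.card_insert_le _ _) ?_
      have hb : (A.biUnion st.J).card ≤ 3*t*t := by
        refine le_trans Finset.card_biUnion_le ?_
        calc ∑ a ∈ A, (st.J a).card = ∑ a ∈ A, (2*t + a.val + 1) :=
              Finset.sum_congr rfl (fun a _ => st.hJcard a)
          _ ≤ ∑ _a ∈ A, 3*t := by
              refine Finset.sum_le_sum (fun a _ => ?_)
              have := a.isLt
              omega
          _ = A.card * (3*t) := by rw [Finset.sum_const, smul_eq_mul]
          _ ≤ t * (3*t) := by
              refine Nat.mul_le_mul_right _ ?_
              simpa using Finset.card_le_card (Finset.subset_univ A)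
          _ = 3*t*t := by ring
      omega
    omega
  have h2 := Finset.card_sdiff_add_card_eq_card
    (Finset.subset_univ (insert st.idia (insert (st.istar (Fin.last t)) (A.biUnion st.J))))
  simp only [Finset.card_univ, Fintype.card_fin] at h2
  omega

lemma hdeg_ne (A : Finset (Fin t)) (a : Fin t) (ha : a ∉ A)
    (ht : 3 ≤ t) (hrt : 3*t*t + 3*t + 2 < r) :
    ∀ v, hdeg (st.HA A) v ≠ 2 * (2*t + a.val + 1) := by
  intro v
  have haval : a.val < t := a.isLt
  match v with
  | Sum.inr i0 => rw [st.hdeg_inr A i0]; omega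
  | Sum.inl x =>
    by_cases hxs : (x : P) ∈ st.Sl
    · obtain ⟨i, hi⟩ := st.hs_surj x hxs
      have hxi : x = st.sp i := Subtype.ext hi.symm
      rw [hxi, st.hdeg_inl_s A i]
      omega
    · by_cases hxp : ∃ j, x = st.pt j
      · obtain ⟨j, rfl⟩ := hxp
        rcases Fin.eq_castSucc_or_eq_last j with ⟨b, rfl⟩ | rfl
        · by_cases hb : b ∈ A
          · rw [st.hdeg_pt_act A b hb]
            have hba : b.val ≠ a.val := by
              intro e
              exact ha (Fin.ext e ▸ hb)
            omega
          · rw [st.hdeg_pt_inact A b hb]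
            omega
        · rw [st.hdeg_pt_last A]
          have hbb := st.cardB0_ge A
          omega
      · push_neg at hxp
        rw [st.hdeg_inl_not_s A x hxs]
        have hacc := st.accidental_bound A x hxp
        have hconv : Set.ncard {i : Fin r | (x : P) ∈ st.lineF A i} =
            (univ.filter fun i => (x : P) ∈ st.lineF A i).card := by
          rw [← Set.ncard_coe_finset]
          congr 1
          ext i
          simp
        rw [hconv]
        omega

lemma not_iso (A B : Finset (Fin t)) (hAB : A ≠ B)
    (ht : 3 ≤ t) (hrt : 3*t*t + 3*t + 2 < r) :
    ¬ Isomorphic (st.HA A) (st.HA B) := by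
  intro hiso
  have hex : (∃ a, a ∈ A ∧ a ∉ B) ∨ (∃ a, a ∈ B ∧ a ∉ A) := by
    by_contra hcon
    push_neg at hcon
    exact hAB (Finset.ext fun a => ⟨fun h => hcon.1 a h, fun h => hcon.2 a h⟩)
  rcases hex with ⟨a, haA, haB⟩ | ⟨a, haB, haA⟩
  · obtain ⟨v, hv⟩ := iso_hdeg hiso _ ⟨_, st.hdeg_pt_act A a haA⟩
    exact st.hdeg_ne B a haB ht hrt v hv
  · obtain ⟨v, hv⟩ := iso_hdeg hiso.symm' _ ⟨_, st.hdeg_pt_act B a haB⟩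
    exact st.hdeg_ne A a haA ht hrt v hv

end Setup
section Exists

open Configuration

variable {P L : Type u} [Membership P L] [Fintype P] [Fintype L]
  [Configuration.ProjectivePlane P L]

lemma card_filter_lines (x : P) :
    (Finset.univ.filter fun l : L => x ∈ l).card = ProjectivePlane.order P L + 1 := by
  have h : Configuration.lineCount L x = (Finset.univ.filter fun l : L => x ∈ l).card := by
    rw [Configuration.lineCount, Nat.card_eq_fintype_card, Fintype.card_subtype]
  rw [← h, Configuration.ProjectivePlane.lineCount_eq]

lemma card_linePoints {w : P} {ℓ : L} (hw : w ∉ ℓ) :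
    (linePoints w ℓ).card = ProjectivePlane.order P L + 1 := by
  have h1 : (linePoints w ℓ).card = Fintype.card {p : {p : P // p ≠ w} // (p : P) ∈ ℓ} := by
    rw [Fintype.card_subtype, linePoints]
  have e : {p : {p : P // p ≠ w} // (p : P) ∈ ℓ} ≃ {p : P // p ∈ ℓ} :=
    { toFun := fun a => ⟨a.1.1, a.2⟩
      invFun := fun b => ⟨⟨b.1, fun h => hw (h ▸ b.2)⟩, b.2⟩
      left_inv := fun a => rfl
      right_inv := fun b => rfl }
  have h2 : Configuration.pointCount P ℓ = Fintype.card {p : P // p ∈ ℓ} := by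
    rw [Configuration.pointCount, Nat.card_eq_fintype_card]
  rw [h1, Fintype.card_congr e, ← h2, Configuration.ProjectivePlane.pointCount_eq]

lemma setup_exists (w : P) {r t q : ℕ} (m : Fin r → L)
    (hm : EnumeratesLinesThrough w m)
    (hq : Configuration.ProjectivePlane.order P L = q) (hr : r = q + 1)
    (ht1 : 1 ≤ t) (htq : t + 4 ≤ q) (htr : 3*t*t + t + 2 ≤ r) :
    Nonempty (Setup P L w r t m) := by
  classical
  obtain ⟨hm_inj, hm_w, hm_surj⟩ := hm
  -- the line S
  obtain ⟨Sl, hSw⟩ := Configuration.Nondegenerate.exists_line (P := P) (L := L) w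
  have hSm : ∀ i, Sl ≠ m i := fun i e => hSw (e ▸ hm_w i)
  -- the points s i
  have spx : ∀ i : Fin r, {x : P // x ∈ Sl ∧ x ∈ m i} := fun i =>
    ⟨Configuration.HasPoints.mkPoint (hSm i), Configuration.HasPoints.mkPoint_ax (hSm i)⟩
  set sp : Fin r → {p : P // p ≠ w} := fun i =>
    ⟨(spx i).1, fun h => hSw (h ▸ (spx i).2.1)⟩ with hsp_def
  have hs_S : ∀ i, (sp i : P) ∈ Sl := fun i => (spx i).2.1
  have hs_m : ∀ i, (sp i : P) ∈ m i := fun i => (spx i).2.2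
  have hs_surj : ∀ p' : P, p' ∈ Sl → ∃ i, (sp i : P) = p' := by
    intro p' hp'
    have hp'w : p' ≠ w := fun h => hSw (h ▸ hp')
    obtain ⟨i, hi⟩ := hm_surj (Configuration.HasLines.mkLine hp'w)
      (Configuration.HasLines.mkLine_ax hp'w).2
    refine ⟨i, point_eq_of (hSm i) (hs_S i) (hs_m i) hp' ?_⟩
    rw [hi]
    exact (Configuration.HasLines.mkLine_ax hp'w).1
  -- auxiliary point y off Sl and ≠ w
  have hq4 : 4 < q + 1 := by omega
  have hr0 : 0 < r := by omega
  set i₀ : Fin r := ⟨0, hr0⟩ with hi₀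
  have hycard : 0 < ((Finset.univ.filter fun x : P => x ∈ m i₀) \ {w, (sp i₀ : P)}).card := by
    have h1 : (Finset.univ.filter fun x : P => x ∈ m i₀).card = q + 1 := by
      have hh : Configuration.pointCount P (m i₀) =
          (Finset.univ.filter fun x : P => x ∈ m i₀).card := by
        rw [Configuration.pointCount, Nat.card_eq_fintype_card, Fintype.card_subtype]
      rw [← hh, Configuration.ProjectivePlane.pointCount_eq, hq]
    have h2 : ({w, (sp i₀ : P)} : Finset P).card ≤ 2 :=
      le_trans (Finset.card_insert_le _ _) (by simp)
    have h3 := Finset.le_card_sdiff ({w, (sp i₀ : P)} : Finset P)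
      (Finset.univ.filter fun x : P => x ∈ m i₀)
    omega
  obtain ⟨y, hy⟩ := Finset.card_pos.1 hycard
  rw [Finset.mem_sdiff, Finset.mem_filter, Finset.mem_insert, Finset.mem_singleton] at hy
  push_neg at hy
  obtain ⟨⟨-, hym⟩, hyw, hys⟩ := hy
  have hynS : y ∉ Sl := by
    intro h
    exact hys (point_eq_of (hSm i₀) h hym (hs_S i₀) (hs_m i₀))
  -- the line lstar
  have hlscard : 0 < ((Finset.univ.filter fun l : L => y ∈ l) \
      {Configuration.HasLines.mkLine hyw}).card := by
    have h1 := card_filter_lines (L := L) y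
    rw [hq] at h1
    have h3 := Finset.le_card_sdiff ({Configuration.HasLines.mkLine hyw} : Finset L)
      (Finset.univ.filter fun l : L => y ∈ l)
    simp only [Finset.card_singleton] at h3
    omega
  obtain ⟨ls, hls⟩ := Finset.card_pos.1 hlscard
  rw [Finset.mem_sdiff, Finset.mem_filter, Finset.mem_singleton] at hls
  obtain ⟨⟨-, hyls⟩, hlsmk⟩ := hls
  have hlsw : w ∉ ls := by
    intro h
    exact hlsmk (line_eq_of hyw hyls h (Configuration.HasLines.mkLine_ax hyw).1
      (Configuration.HasLines.mkLine_ax hyw).2)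
  have hlsS : ls ≠ Sl := fun h => hynS (h ▸ hyls)
  -- the point x0 and index idia
  have hSls : Sl ≠ ls := fun h => hlsS h.symm
  set x0 : P := Configuration.HasPoints.mkPoint hSls with hx0
  have hx0S : x0 ∈ Sl := (Configuration.HasPoints.mkPoint_ax hSls).1
  have hx0ls : x0 ∈ ls := (Configuration.HasPoints.mkPoint_ax hSls).2
  obtain ⟨idia, hidia_eq⟩ := hs_surj x0 hx0S
  have hidia : (sp idia : P) ∈ ls := hidia_eq ▸ hx0ls
  -- the designated points pt
  have hx0w : x0 ≠ w := fun h => hSw (h ▸ hx0S)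
  set xv : {p : P // p ≠ w} := ⟨x0, hx0w⟩ with hxv
  have hW0card : t + 1 ≤ ((linePoints w ls).erase xv).card := by
    have h1 := card_linePoints (w := w) hlsw
    rw [hq] at h1
    have h2 := Finset.pred_card_le_card_erase (s := linePoints w ls) (a := xv)
    omega
  obtain ⟨W, hWsub, hWcard⟩ := Finset.exists_subset_card_eq hW0card
  set pt : Fin (t+1) → {p : P // p ≠ w} := fun j =>
    (W.equivFin.symm (Fin.cast hWcard.symm j)).1 with hpt
  have hptW : ∀ j, pt j ∈ W := fun j => (W.equivFin.symm (Fin.cast hWcard.symm j)).2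
  have hp_inj : Function.Injective pt := by
    intro j j' h
    have := Subtype.ext (p := fun x => x ∈ W) h
    have h2 := W.equivFin.symm.injective this
    exact Fin.cast_injective _ h2
  have hp_ls : ∀ j, (pt j : P) ∈ ls := by
    intro j
    have := Finset.mem_of_mem_erase (hWsub (hptW j))
    exact (mem_linePoints _).1 this
  have hp_ne_xv : ∀ j, pt j ≠ xv := fun j => Finset.ne_of_mem_erase (hWsub (hptW j))
  have hp_nS : ∀ j, (pt j : P) ∉ Sl := by
    intro j h
    refine hp_ne_xv j (Subtype.ext ?_)
    exact point_eq_of hSls h (hp_ls j) hx0S hx0ls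
  -- istar
  have histar_ex : ∀ j : Fin (t+1), ∃ i, ∀ i' : Fin r, ((pt j : P) ∈ m i' ↔ i' = i) := by
    intro j
    obtain ⟨i, hi⟩ := hm_surj (Configuration.HasLines.mkLine (pt j).2)
      (Configuration.HasLines.mkLine_ax (pt j).2).2
    refine ⟨i, fun i' => ⟨fun h => ?_, fun h => ?_⟩⟩
    · refine hm_inj ?_
      rw [hi]
      exact line_eq_of (pt j).2 h (hm_w i') (Configuration.HasLines.mkLine_ax (pt j).2).1
        (Configuration.HasLines.mkLine_ax (pt j).2).2
    · rw [h, hi]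
      exact (Configuration.HasLines.mkLine_ax (pt j).2).1
  set istar : Fin (t+1) → Fin r := fun j => (histar_ex j).choose with histar_def
  have histar : ∀ j i, ((pt j : P) ∈ m i ↔ i = istar j) := fun j i => (histar_ex j).choose_spec i
  -- the line ldia
  have hldcard : 0 < ((Finset.univ.filter fun l : L => x0 ∈ l) \ {Sl, ls, m idia}).card := by
    have h1 := card_filter_lines (L := L) x0
    rw [hq] at h1
    have h2 : ({Sl, ls, m idia} : Finset L).card ≤ 3 := by
      calc ({Sl, ls, m idia} : Finset L).card
          ≤ ({ls, m idia} : Finset L).card + 1 := Finset.card_insert_le _ _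
        _ ≤ (({m idia} : Finset L).card + 1) + 1 :=
            Nat.add_le_add_right (Finset.card_insert_le _ _) 1
        _ ≤ 3 := by simp
    have h3 := Finset.le_card_sdiff ({Sl, ls, m idia} : Finset L)
      (Finset.univ.filter fun l : L => x0 ∈ l)
    omega
  obtain ⟨ldia, hld⟩ := Finset.card_pos.1 hldcard
  rw [Finset.mem_sdiff, Finset.mem_filter] at hld
  obtain ⟨⟨-, hx0ld⟩, hldne⟩ := hld
  simp only [Finset.mem_insert, Finset.mem_singleton, not_or] at hldne
  obtain ⟨hldS, hldls, hldm⟩ := hldne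
  have hldia_s : (sp idia : P) ∈ ldia := hidia_eq ▸ hx0ld
  have hldia_w : w ∉ ldia := by
    intro h
    refine hldm (line_eq_of hx0w hx0ld h ?_ (hm_w idia))
    rw [← hidia_eq]
    exact hs_m idia
  -- the line lsing
  set slp : {p : P // p ≠ w} := sp (istar (Fin.last t)) with hslp
  have hslp_ne_pt : ∀ j : Fin (t+1), (slp : P) ≠ (pt j : P) := by
    intro j h
    exact hp_nS j (h ▸ hs_S (istar (Fin.last t)))
  set mkl : Fin (t+1) → L := fun j => Configuration.HasLines.mkLine (hslp_ne_pt j) with hmkl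
  have himgcard : (Finset.univ.image mkl).card ≤ t + 1 :=
    le_trans Finset.card_image_le (by simp)
  have hsingcard : 0 < ((Finset.univ.filter fun l : L => (slp : P) ∈ l) \
      (insert Sl (insert (m (istar (Fin.last t))) (Finset.univ.image mkl)))).card := by
    have h1 := card_filter_lines (L := L) (slp : P)
    rw [hq] at h1
    have h5 := Finset.card_insert_le (m (istar (Fin.last t))) (Finset.univ.image mkl)
    have h6 := Finset.card_insert_le Sl
      (insert (m (istar (Fin.last t))) (Finset.univ.image mkl))
    have h3 := Finset.le_card_sdiff
      (insert Sl (insert (m (istar (Fin.last t))) (Finset.univ.image mkl)))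
      (Finset.univ.filter fun l : L => (slp : P) ∈ l)
    omega
  obtain ⟨lsing, hlsg⟩ := Finset.card_pos.1 hsingcard
  rw [Finset.mem_sdiff, Finset.mem_filter] at hlsg
  obtain ⟨⟨-, hslsg⟩, hlsgne⟩ := hlsg
  simp only [Finset.mem_insert, Finset.mem_image, Finset.mem_univ, true_and, not_or,
    not_exists] at hlsgne
  obtain ⟨hlsgS, hlsgm, hlsgmk⟩ := hlsgne
  have hlsing_w : w ∉ lsing := by
    intro h
    exact hlsgm (line_eq_of slp.2 hslsg h (hs_m _) (hm_w _))
  have hlsing_p : ∀ j, (pt j : P) ∉ lsing := by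
    intro j h
    exact hlsgmk j (line_eq_of (hslp_ne_pt j)
      (Configuration.HasLines.mkLine_ax (hslp_ne_pt j)).1
      (Configuration.HasLines.mkLine_ax (hslp_ne_pt j)).2 hslsg h)
  -- the blocks J
  set U : Finset (Fin r) := Finset.univ \ (insert idia (Finset.univ.image istar)) with hU
  have hUcard : t * (3*t) ≤ U.card := by
    have h1 : (insert idia (Finset.univ.image istar)).card ≤ t + 2 := by
      have h1a : (Finset.univ.image istar).card ≤ t + 1 :=
        le_trans Finset.card_image_le (by simp)
      have h1b := Finset.card_insert_le idia (Finset.univ.image istar)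
      omega
    have h2 := Finset.card_sdiff_add_card_eq_card
      (Finset.subset_univ (insert idia (Finset.univ.image istar)))
    simp only [Finset.card_univ, Fintype.card_fin] at h2
    rw [← hU] at h2
    have h3 : t * (3*t) = 3*t*t := by ring
    omega
  obtain ⟨W2, hW2sub, hW2card⟩ := Finset.exists_subset_card_eq hUcard
  set ι : Fin t × Fin (3*t) → Fin r := fun z =>
    (W2.equivFin.symm (Fin.cast hW2card.symm (finProdFinEquiv z))).1 with hι
  have hιW2 : ∀ z, ι z ∈ W2 := fun z => (W2.equivFin.symm (Fin.cast hW2card.symm _)).2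
  have hι_inj : Function.Injective ι := by
    intro z z' h
    have := Subtype.ext (p := fun x => x ∈ W2) h
    have h2 := W2.equivFin.symm.injective this
    have h3 := Fin.cast_injective _ h2
    exact finProdFinEquiv.injective h3
  have hbound : ∀ a : Fin t, ∀ x ∈ Finset.range (2*t + a.val + 1), x < 3*t := by
    intro a x hx
    rw [Finset.mem_range] at hx
    have := a.isLt
    omega
  set J : Fin t → Finset (Fin r) := fun a =>
    ((Finset.range (2*t + a.val + 1)).attachFin (hbound a)).image (fun b => ι (a, b)) with hJ
  have hJcard : ∀ a, (J a).card = 2*t + a.val + 1 := by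
    intro a
    rw [hJ]
    simp only
    rw [Finset.card_image_of_injective _ (fun b b' h => congrArg Prod.snd (hι_inj h))]
    rw [Finset.card_attachFin, Finset.card_range]
  have hJmem : ∀ a i, i ∈ J a → ∃ b, ι (a, b) = i := by
    intro a i hi
    rw [hJ] at hi
    simp only [Finset.mem_image] at hi
    obtain ⟨b, _, hb⟩ := hi
    exact ⟨b, hb⟩
  have hJU : ∀ a i, i ∈ J a → i ∈ U := by
    intro a i hi
    obtain ⟨b, hb⟩ := hJmem a i hi
    exact hW2sub (hb ▸ hιW2 (a, b))
  refine ⟨{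
    hm_inj := hm_inj, hm_w := hm_w, Sl := Sl, hSw := hSw, sp := sp,
    hs_S := hs_S, hs_m := hs_m, hs_surj := hs_surj,
    ls := ls, hlsw := hlsw, hlsS := hlsS, idia := idia, hidia := hidia,
    pt := pt, hp_inj := hp_inj, hp_ls := hp_ls, hp_nS := hp_nS,
    istar := istar, histar := histar,
    ldia := ldia, hldia_s := hldia_s, hldia_S := hldS, hldia_ls := hldls, hldia_w := hldia_w,
    lsing := lsing, hlsing_s := hslsg, hlsing_S := hlsgS, hlsing_w := hlsing_w,
    hlsing_p := hlsing_p,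
    J := J, hJcard := hJcard,
    hJdisj := ?_, hJdia := ?_, hJstar := ?_ }⟩
  · intro a a' i hi hi'
    obtain ⟨b, hb⟩ := hJmem a i hi
    obtain ⟨b', hb'⟩ := hJmem a' i hi'
    exact congrArg Prod.fst (hι_inj (hb.trans hb'.symm))
  · intro a i hi
    have hU' := hJU a i hi
    rw [hU, Finset.mem_sdiff] at hU'
    intro h
    refine hU'.2 ?_
    rw [h]
    exact Finset.mem_insert_self _ _
  · intro a i j hi
    have hiU := hJU a i hi
    rw [hU, Finset.mem_sdiff] at hiU
    intro h
    refine hiU.2 (Finset.mem_insert.2 (Or.inr ?_))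
    rw [h]
    exact Finset.mem_image_of_mem istar (Finset.mem_univ j)

end Exists

lemma exp_le_pow_aux (δ : ℝ) (hδ : 0 < δ) (r t : ℕ)
    (hr6 : 1000000 ≤ r) (hrδ : ((32:ℝ))^((1:ℝ)/δ) ≤ (r:ℝ)) (ht : t = Nat.sqrt r / 8) :
    Real.exp ((r : ℝ) ^ ((1 : ℝ) / 2 - δ)) ≤ ((2^t : ℕ) : ℝ) := by
  have hr' : (1000000:ℝ) ≤ (r:ℝ) := by exact_mod_cast hr6
  have hrpos : (0:ℝ) < r := lt_of_lt_of_le (by norm_num) hr'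
  -- step 1 : r^(1/2-δ) ≤ √r / 32
  have h32 : (32:ℝ) ≤ (r:ℝ)^δ := by
    have e1 : ((32:ℝ)^((1:ℝ)/δ))^δ = 32 := by
      rw [← Real.rpow_mul (by norm_num : (0:ℝ) ≤ 32)]
      rw [one_div, inv_mul_cancel₀ (ne_of_gt hδ), Real.rpow_one]
    calc (32:ℝ) = ((32:ℝ)^((1:ℝ)/δ))^δ := e1.symm
      _ ≤ (r:ℝ)^δ := Real.rpow_le_rpow (Real.rpow_nonneg (by norm_num) _) hrδ hδ.le
  have h2 : (r:ℝ)^(-δ) ≤ 1/32 := by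
    rw [Real.rpow_neg hrpos.le]
    rw [one_div]
    exact inv_anti₀ (by norm_num) h32
  have h1 : (r:ℝ)^((1:ℝ)/2 - δ) ≤ Real.sqrt r * (1/32) := by
    rw [sub_eq_add_neg, Real.rpow_add hrpos, Real.sqrt_eq_rpow]
    exact mul_le_mul_of_nonneg_left h2 (Real.rpow_nonneg hrpos.le _)
  -- step 2 : √r/32 ≤ t * log 2
  have hs1 : Real.sqrt r ≤ (Nat.sqrt r : ℝ) + 1 := by
    have := Nat.lt_succ_sqrt' r
    have hc : (r:ℝ) < ((Nat.sqrt r : ℝ) + 1)^2 := by exact_mod_cast this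
    have := (Real.sqrt_lt' (by positivity : (0:ℝ) < (Nat.sqrt r : ℝ) + 1)).2 hc
    linarith
  have hs2 : (1000:ℝ) ≤ Real.sqrt r := by
    rw [Real.le_sqrt (by norm_num) hrpos.le]
    norm_num
    linarith
  have ht8 : Nat.sqrt r ≤ 8*t + 7 := by
    have := Nat.div_add_mod (Nat.sqrt r) 8
    have h2 := Nat.mod_lt (Nat.sqrt r) (show 0 < 8 by norm_num)
    omega
  have htR : (Real.sqrt r - 8)/8 ≤ (t:ℝ) := by
    have hc : (Nat.sqrt r : ℝ) ≤ 8*(t:ℝ) + 7 := by exact_mod_cast ht8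
    linarith
  have hlog := Real.log_two_gt_d9
  have hstep : (Real.sqrt r - 8)/8 * 0.6931471803 ≤ (t:ℝ) * Real.log 2 := by
    refine mul_le_mul htR hlog.le (by norm_num) (by positivity)
  have h3 : Real.sqrt r * (1/32) ≤ (t:ℝ) * Real.log 2 := by
    nlinarith
  -- step 3
  have h4 : Real.exp ((t:ℝ) * Real.log 2) = ((2^t : ℕ) : ℝ) := by
    rw [Real.exp_nat_mul, Real.exp_log (by norm_num : (0:ℝ) < 2)]
    push_cast
    ring
  calc Real.exp ((r : ℝ) ^ ((1 : ℝ) / 2 - δ))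
      ≤ Real.exp ((t:ℝ) * Real.log 2) := Real.exp_le_exp.2 (le_trans h1 h3)
    _ = ((2^t : ℕ) : ℝ) := h4

lemma filter_testBit_ne {t : ℕ} {k l : Fin (2^t)} (hkl : k ≠ l) :
    (Finset.univ.filter fun a : Fin t => Nat.testBit k.val a.val) ≠
    (Finset.univ.filter fun a : Fin t => Nat.testBit l.val a.val) := by
  intro h
  apply hkl
  apply Fin.ext
  apply Nat.eq_of_testBit_eq
  intro i
  by_cases hi : i < t
  · have h2 := Finset.ext_iff.1 h ⟨i, hi⟩
    simp only [Finset.mem_filter, Finset.mem_univ, true_and] at h2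
    cases hk : Nat.testBit k.val i <;> cases hl : Nat.testBit l.val i <;> simp_all
  · have hgt : 2^t ≤ 2^i := Nat.pow_le_pow_right (by norm_num) (le_of_not_gt hi)
    rw [Nat.testBit_lt_two_pow (lt_of_lt_of_le k.isLt hgt),
      Nat.testBit_lt_two_pow (lt_of_lt_of_le l.isLt hgt)]

theorem statement_7 (δ : ℝ) (hδ : 0 < δ) :
    ∃ r₀ : ℕ, ∀ q r : ℕ, IsPrimePow q → r = q + 1 → r₀ ≤ r →
      ∀ (P L : Type u) [Membership P L] [Fintype P] [Fintype L]
        [Configuration.ProjectivePlane P L],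
        Configuration.ProjectivePlane.order P L = q →
        ∀ (w : P) (m : Fin r → L), EnumeratesLinesThrough w m →
          ∃ (n : ℕ) (s : Fin n → Fin r → {p : P // p ≠ w})
            (F : Fin n → Fin r → Finset {p : P // p ≠ w}),
            Real.exp ((r : ℝ) ^ ((1 : ℝ) / 2 - δ)) ≤ (n : ℝ) ∧
            (∀ k : Fin n, (∀ i, ((s k i : P) ∈ m i)) ∧
              Finset.univ.image (s k) ∈ truncatedPP P L w ∧
              ∀ i, F k i ∈ truncatedPP P L w ∧
                Finset.univ.image (s k) ∩ F k i = {s k i}) ∧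
            ∀ k l : Fin n, k ≠ l →
              ¬ Isomorphic (constructionS (s k) (F k)) (constructionS (s l) (F l)) := by
  refine ⟨max 1000000 (⌈(32:ℝ)^((1:ℝ)/δ)⌉₊ + 1), ?_⟩
  intro q r _hpp hrq hr₀ P L _i1 _i2 _i3 _i4 horder w m hm
  have hr6 : 1000000 ≤ r := le_trans (le_max_left _ _) hr₀
  have hrδ : ((32:ℝ))^((1:ℝ)/δ) ≤ (r:ℝ) := by
    have h1 : ⌈(32:ℝ)^((1:ℝ)/δ)⌉₊ + 1 ≤ r := le_trans (le_max_right _ _) hr₀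
    calc ((32:ℝ)^((1:ℝ)/δ)) ≤ (⌈(32:ℝ)^((1:ℝ)/δ)⌉₊ : ℝ) := Nat.le_ceil _
      _ ≤ (r:ℝ) := by exact_mod_cast le_trans (Nat.le_succ _) h1
  set t := Nat.sqrt r / 8 with ht_def
  have hsqrt_ge : 1000 ≤ Nat.sqrt r := Nat.le_sqrt.2 (by omega)
  have ht125 : 125 ≤ t := by
    rw [ht_def]
    rw [Nat.le_div_iff_mul_le (by norm_num)]
    omega
  have h8t : 8 * t ≤ Nat.sqrt r := by
    rw [ht_def, mul_comm]
    exact Nat.div_mul_le_self _ _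
  have h64 : 64 * (t*t) ≤ r := by
    calc 64*(t*t) = (8*t)*(8*t) := by ring
      _ ≤ Nat.sqrt r * Nat.sqrt r := Nat.mul_le_mul h8t h8t
      _ ≤ r := by simpa [pow_two] using Nat.sqrt_le' r
  have htt : t ≤ t*t := Nat.le_mul_of_pos_left t (by omega)
  have ht1 : 1 ≤ t := by omega
  have ht3 : 3 ≤ t := by omega
  have htq : t + 4 ≤ q := by omega
  have htr : 3*t*t + t + 2 ≤ r := by
    have e1 : 3*t*t = 3*(t*t) := by ring
    omega
  have hrt : 3*t*t + 3*t + 2 < r := by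
    have e1 : 3*t*t = 3*(t*t) := by ring
    omega
  obtain ⟨st⟩ := setup_exists w m hm horder hrq ht1 htq htr
  refine ⟨2^t, fun _ => st.sp,
    fun k => st.Ffin (Finset.univ.filter fun a : Fin t => Nat.testBit k.val a.val),
    ?_, ?_, ?_⟩
  · exact exp_le_pow_aux δ hδ r t hr6 hrδ ht_def
  · intro k
    exact ⟨st.hs_m, st.image_sp_mem_truncated,
      fun i => ⟨st.Ffin_mem_truncated _ i, st.image_inter _ i⟩⟩
  · intro k l hkl
    exact st.not_iso _ _ (filter_testBit_ne hkl) ht3 hrt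

end
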